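/- arXiv:2303.15717 — 2 statements merged into one kernel-verified Lean document; each statement's English description precedes it below -/
import Mathlib

section
/- Let X be a complex Banach space and L(X) the Banach algebra of bounded linear operators on X. If P, Q ∈ L(X) have strongly Drazin inverses and PQ = 0, then P + Q has a strongly Drazin inverse. -/
/-!
An element `a` of a ring has a strongly Drazin inverse iff `a - a ^ 2` is nilpotent, i.e. iff `a`
is a nilpotent perturbation of an idempotent commuting with it; the idempotent is lifted along the
nilradical of the commutative subring generated by `a`. If `a * b = 0`, then
`(a + b) - (a + b) ^ 2 = (a - a ^ 2) + (-(b * a) + (b - b ^ 2))`, and in both sums the product of the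
first summand with the second vanishes. Two nilpotents `x, y` with `x * y = 0` have a nilpotent
sum, because every word in `x` and `y` in which some `x` precedes some `y` vanishes.
-/

/-- `a` has a Hirano inverse: there exists `z` with `az = za`, `z = zaz`,
and `a^2 - az` nilpotent. -/
def HasHiranoInverse {R : Type*} [Ring R] (a : R) : Prop :=
  ∃ z : R, a * z = z * a ∧ z = z * a * z ∧ IsNilpotent (a ^ 2 - a * z)

/-- `a` has a strongly Drazin inverse: there exists `z` with `az = za`, `z = zaz`,
and `a - az` nilpotent. -/
def HasStronglyDrazinInverse {R : Type*} [Ring R] (a : R) : Prop :=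
  ∃ z : R, a * z = z * a ∧ z = z * a * z ∧ IsNilpotent (a - a * z)

section CommRing

variable {R : Type*} [CommRing R]

theorem exists_isIdempotentElem_isNilpotent_sub_of_isNilpotent_sub_sq {a : R}
    (h : IsNilpotent (a - a ^ 2)) : ∃ e : R, IsIdempotentElem e ∧ IsNilpotent (a - e) := by
  let f := Ideal.Quotient.mk (nilradical R)
  have hker : ∀ x ∈ RingHom.ker f, IsNilpotent x := fun x hx =>
    mem_nilradical.mp (Ideal.Quotient.eq_zero_iff_mem.mp hx)
  have hfa : IsIdempotentElem (f a) := by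
    have : f (a - a ^ 2) = 0 := Ideal.Quotient.eq_zero_iff_mem.mpr (mem_nilradical.mpr h)
    rw [map_sub, map_pow, sub_eq_zero, sq] at this
    exact this.symm
  obtain ⟨e, he, hfe⟩ := exists_isIdempotentElem_eq_of_ker_isNilpotent f hker (f a) ⟨a, rfl⟩ hfa
  exact ⟨e, he, hker _ (by rw [RingHom.mem_ker, map_sub, hfe, sub_self])⟩

theorem hasStronglyDrazinInverse_of_isIdempotentElem_of_isNilpotent_sub {a e : R}
    (he : IsIdempotentElem e) (hae : IsNilpotent (a - e)) : HasStronglyDrazinInverse a := by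
  obtain ⟨u, hu⟩ := hae.isUnit_add_one
  have hu' : (a - e + 1) * ↑u⁻¹ = 1 := by rw [← hu, Units.mul_inv]
  have he' : e * e = e := he
  -- `a * e = e * (a - e + 1)`, so `a` acts on `e R` as the unit `a - e + 1`.
  have hz : a * (e * ↑u⁻¹) = e := by linear_combination ↑u⁻¹ * he' + e * hu'
  refine ⟨e * ↑u⁻¹, mul_comm _ _, ?_, by rwa [hz]⟩
  linear_combination (-(e * ↑u⁻¹)) * hz - ↑u⁻¹ * he'

end CommRing

section Ring

variable {R : Type*} [Ring R]

theorem HasStronglyDrazinInverse.map {S : Type*} [Ring S] (f : R →+* S) {a : R}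
    (h : HasStronglyDrazinInverse a) : HasStronglyDrazinInverse (f a) := by
  obtain ⟨z, hc, hz, hn⟩ := h
  exact ⟨f z, by rw [← map_mul, ← map_mul, hc], by rw [← map_mul, ← map_mul, ← hz],
    by rw [← map_mul, ← map_sub]; exact hn.map f⟩

theorem HasStronglyDrazinInverse.isNilpotent_sub_sq {a : R}
    (h : HasStronglyDrazinInverse a) : IsNilpotent (a - a ^ 2) := by
  obtain ⟨z, hc, hz, hn⟩ := h
  have hcomm : Commute a (a * z) := by
    change a * (a * z) = a * z * a
    rw [hc, ← mul_assoc, hc]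
  have hidem : a * z * (a * z) = a * z := by
    rw [mul_assoc, ← mul_assoc z, ← hz]
  have hfactor : (a - a * z) * (1 - a * z - a) = a - a ^ 2 := by
    simp only [mul_sub, sub_mul, mul_one, hidem, hcomm.eq, sq]
    abel
  rw [← hfactor]
  refine Commute.isNilpotent_mul_right ?_ hn
  exact ((Commute.one_right _).sub_right ((hcomm.sub_left (.refl _)))).sub_right
    ((Commute.refl a).sub_left hcomm.symm)

open scoped IsMulCommutative in
theorem hasStronglyDrazinInverse_of_isNilpotent_sub_sq {a : R}
    (h : IsNilpotent (a - a ^ 2)) : HasStronglyDrazinInverse a := by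
  let S := Subring.closure ({a} : Set R)
  have : IsMulCommutative S := Subring.isMulCommutative_closure (by simp)
  let a' : S := ⟨a, Subring.subset_closure rfl⟩
  have h' : IsNilpotent (a' - a' ^ 2) := (IsNilpotent.map_iff (f := S.subtype) Subtype.val_injective).mp h
  obtain ⟨e, he, hae⟩ := exists_isIdempotentElem_isNilpotent_sub_of_isNilpotent_sub_sq h'
  exact (hasStronglyDrazinInverse_of_isIdempotentElem_of_isNilpotent_sub he hae).map S.subtype

theorem hasStronglyDrazinInverse_iff_isNilpotent_sub_sq {a : R} :
    HasStronglyDrazinInverse a ↔ IsNilpotent (a - a ^ 2) :=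
  ⟨HasStronglyDrazinInverse.isNilpotent_sub_sq, hasStronglyDrazinInverse_of_isNilpotent_sub_sq⟩

theorem add_pow_mul_eq_pow_of_mul_eq_zero {x y : R} (h : x * y = 0) (n : ℕ) :
    (x + y) ^ n * y = y ^ (n + 1) := by
  induction n with
  | zero => simp
  | succ n ih => rw [pow_succ, mul_assoc, add_mul, h, zero_add, ← mul_assoc, ih, ← pow_succ]

theorem IsNilpotent.add_of_mul_eq_zero {x y : R} (h : x * y = 0)
    (hx : IsNilpotent x) (hy : IsNilpotent y) : IsNilpotent (x + y) := by
  obtain ⟨n, hn⟩ := hx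
  obtain ⟨m, hm⟩ := hy
  have key : ∀ i, (x + y) ^ (m + i) = (x + y) ^ m * x ^ i := by
    intro i
    induction i with
    | zero => simp
    | succ i ih =>
      have hy0 : (x + y) ^ (m + i) * y = 0 := by
        rw [add_pow_mul_eq_pow_of_mul_eq_zero h, add_assoc, pow_add, hm, zero_mul]
      rw [← add_assoc, _root_.pow_succ, mul_add, hy0, add_zero, ih, mul_assoc, _root_.pow_succ]
  exact ⟨m + n, by rw [key, hn, mul_zero]⟩

theorem HasStronglyDrazinInverse.add {a b : R} (ha : HasStronglyDrazinInverse a)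
    (hb : HasStronglyDrazinInverse b) (h : a * b = 0) : HasStronglyDrazinInverse (a + b) := by
  rw [hasStronglyDrazinInverse_iff_isNilpotent_sub_sq] at ha hb ⊢
  have hab : ∀ c, a * (b * c) = 0 := fun c => by rw [← mul_assoc, h, zero_mul]
  have hba : IsNilpotent (-(b * a)) := ⟨2, by simp [sq, mul_assoc, hab]⟩
  have hb' : IsNilpotent (-(b * a) + (b - b ^ 2)) :=
    hba.add_of_mul_eq_zero (by simp [mul_sub, sq, mul_assoc, h, hab]) hb
  have hsplit : a + b - (a + b) ^ 2 = (a - a ^ 2) + (-(b * a) + (b - b ^ 2)) := by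
    simp only [sq, add_mul, mul_add, h]
    abel
  rw [hsplit]
  exact ha.add_of_mul_eq_zero (by simp [sub_mul, mul_add, mul_neg, mul_sub, sq, mul_assoc, h, hab]) hb'

end Ring

variable {X : Type*} [NormedAddCommGroup X] [NormedSpace ℂ X] [CompleteSpace X]

theorem sdrazin_add (P Q : X →L[ℂ] X)
    (hP : HasStronglyDrazinInverse P) (hQ : HasStronglyDrazinInverse Q)
    (h : P * Q = 0) :
    HasStronglyDrazinInverse (P + Q) :=
  hP.add hQ h
end

section
/- Let X be a complex Banach space and L(X) the Banach algebra of bounded linear operators on X. Let M = [[A, B], [I, 0]] ∈ M₂(L(X)), where I is the identity operator, and suppose A and B have strongly Drazin inverses. If A^D B A^D = 0, B A^π B = 0 and B A A^π = 0, where A^D is the Drazin inverse of A and A^π = I − A·A^D, then M has a Hirano inverse in M₂(L(X)). -/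
variable {X : Type*} [NormedAddCommGroup X] [NormedSpace ℂ X] [CompleteSpace X]

/-!
A ring element `a` has a Hirano inverse as soon as `a ^ 2 - a ^ 4` is nilpotent: in the
commutative subring generated by `a`, lifting the idempotent `a ^ 2` modulo the nilradical gives
a strongly Drazin inverse `w` of `a ^ 2`, and `a * w` is a Hirano inverse of `a`. So it suffices
that `T - T ^ 2` is nilpotent for `T = M ^ 2 = !![A * A + B, A * B; A, B]`.

With `E = A * AD`, split `B = c + b` where `c = B * E` and `b = B * (1 - E)`. The hypotheses give
`E * c = 0` and `b * A = b * B = 0`, so `Q = !![b, A * b; 0, b]` satisfies `Q ^ 2 = 0` and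
`Q * (T - Q) = 0`; this makes `T - T ^ 2` nilpotent as soon as `P - P ^ 2` is, for `P = T - Q`.
Now `P` is lower triangular with respect to the idempotent `diag(E, E)`, with diagonal corners
`!![x ^ 2, 0; x, 0]` for `x = A * E` and `x = A * (1 - E)`; for both, `x - x ^ 2` is nilpotent
because `A - E` is nilpotent and commutes with `E`.
-/

theorem HasHiranoInverse.map {R S F : Type*} [Ring R] [Ring S] [FunLike F R S]
    [RingHomClass F R S] (f : F) {a : R} (ha : HasHiranoInverse a) :
    HasHiranoInverse (f a) := by
  obtain ⟨z, hcomm, hz, hnil⟩ := ha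
  refine ⟨f z, ?_, ?_, ?_⟩
  · rw [← map_mul, hcomm, map_mul]
  · rw [← map_mul, ← map_mul, ← hz]
  · simpa only [map_sub, map_pow, map_mul] using hnil.map f

theorem exists_isIdempotentElem_isNilpotent_sub {S : Type*} [CommRing S] {b : S}
    (hb : IsNilpotent (b - b ^ 2)) : ∃ e : S, IsIdempotentElem e ∧ IsNilpotent (b - e) := by
  let π := Ideal.Quotient.mk (nilradical S)
  have hker : ∀ x ∈ RingHom.ker π, IsNilpotent x := fun x hx => by
    rwa [Ideal.mk_ker, mem_nilradical] at hx
  have hπb : IsIdempotentElem (π b) := by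
    rw [IsIdempotentElem, ← map_mul, eq_comm, Ideal.Quotient.eq, mem_nilradical, ← sq]
    exact hb
  obtain ⟨e, he, hπe⟩ :=
    exists_isIdempotentElem_eq_of_ker_isNilpotent π hker (π b) ⟨b, rfl⟩ hπb
  exact ⟨e, he, mem_nilradical.mp (Ideal.Quotient.eq.mp hπe.symm)⟩

theorem hasStronglyDrazinInverse_of_isNilpotent_sub_sq_s4 {S : Type*} [CommRing S] {b : S}
    (hb : IsNilpotent (b - b ^ 2)) : HasStronglyDrazinInverse b := by
  obtain ⟨e, he, hbe⟩ := exists_isIdempotentElem_isNilpotent_sub hb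
  obtain ⟨u, hu⟩ := hbe.isUnit_one_add
  have hue : b * e = u * e := by rw [hu]; linear_combination he.eq
  have hbz : b * (e * ↑u⁻¹) = e := by
    rw [← mul_assoc, hue, mul_comm (u : S), mul_assoc, Units.mul_inv, mul_one]
  refine ⟨e * ↑u⁻¹, mul_comm _ _, ?_, ?_⟩
  · rw [mul_assoc, hbz, mul_right_comm, he.eq]
  · rwa [hbz]

open scoped IsMulCommutative in
theorem hasHiranoInverse_of_isNilpotent_sq_sub_sq_sq {R : Type*} [Ring R] {a : R}
    (ha : IsNilpotent (a ^ 2 - (a ^ 2) ^ 2)) : HasHiranoInverse a := by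
  let x : Algebra.adjoin ℤ {a} := ⟨a, Algebra.subset_adjoin rfl⟩
  have hx : IsNilpotent (x ^ 2 - (x ^ 2) ^ 2) := by
    rwa [← IsNilpotent.map_iff (f := (Algebra.adjoin ℤ {a}).val) Subtype.val_injective]
  obtain ⟨z, -, hz, hnil⟩ := hasStronglyDrazinInverse_of_isNilpotent_sub_sq_s4 hx
  have hxz : HasHiranoInverse x :=
    ⟨x * z, mul_comm _ _, by linear_combination x * hz, by rwa [← mul_assoc, ← sq]⟩
  exact hxz.map (Algebra.adjoin ℤ {a}).val

section

variable {R : Type*} [Ring R]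

theorem isNilpotent_add_of_mul_eq_zero {x y : R} (hxy : x * y = 0) (hx : IsNilpotent x)
    (hy : IsNilpotent y) : IsNilpotent (x + y) := by
  obtain ⟨p, hp⟩ := hx
  obtain ⟨q, hq⟩ := hy
  have hx_mul_pow : ∀ m : ℕ, x * (x + y) ^ m = x ^ (m + 1) := by
    intro m
    induction m with
    | zero => simp
    | succ m ih =>
      rw [pow_succ, ← mul_assoc, ih, mul_add, pow_succ x m, mul_assoc _ x y, hxy, mul_zero,
        add_zero, ← pow_succ, ← pow_succ]
  have hpow : ∀ j : ℕ, (x + y) ^ (p + j) = y ^ j * (x + y) ^ p := by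
    intro j
    induction j with
    | zero => simp
    | succ j ih =>
      rw [← add_assoc, pow_succ', add_mul, hx_mul_pow, pow_eq_zero_of_le (by omega) hp,
        zero_add, ih, ← mul_assoc, ← pow_succ']
  exact ⟨p + q, by rw [hpow, hq, zero_mul]⟩

theorem IsNilpotent.mul_comm {x y : R} (h : IsNilpotent (x * y)) : IsNilpotent (y * x) := by
  obtain ⟨n, hn⟩ := h
  exact ⟨n + 1, by rw [pow_succ', mul_assoc, ← mul_pow_mul, hn, zero_mul, mul_zero]⟩

theorem IsIdempotentElem.isNilpotent_of_mul_mul_one_sub_eq_zero {f s : R}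
    (hf : IsIdempotentElem f) (hfs : f * s * (1 - f) = 0) (h₁ : IsNilpotent (f * s * f))
    (h₂ : IsNilpotent ((1 - f) * s * (1 - f))) : IsNilpotent s := by
  have hfs_eq : f * s = f * s * f := by
    rw [← sub_eq_zero, ← hfs]; noncomm_ring
  have hgs : IsNilpotent ((1 - f) * s) := by
    have hsg : IsNilpotent (s * (1 - f)) := by
      rw [mul_assoc] at h₂
      simpa only [mul_assoc, hf.one_sub.eq] using h₂.mul_comm
    exact hsg.mul_comm
  have hs : s = f * s + (1 - f) * s := by noncomm_ring
  rw [hs]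
  refine isNilpotent_add_of_mul_eq_zero ?_ (hfs_eq ▸ h₁) hgs
  rw [← mul_assoc, hfs, zero_mul]

theorem IsIdempotentElem.isNilpotent_sub_sq_of_mul_mul_one_sub_eq_zero {f s : R}
    (hf : IsIdempotentElem f) (hfs : f * s * (1 - f) = 0)
    (h₁ : IsNilpotent (f * s * f - (f * s * f) ^ 2))
    (h₂ : IsNilpotent ((1 - f) * s * (1 - f) - ((1 - f) * s * (1 - f)) ^ 2)) :
    IsNilpotent (s - s ^ 2) := by
  have hff : f * f - f = 0 := sub_eq_zero.2 hf.eq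
  refine hf.isNilpotent_of_mul_mul_one_sub_eq_zero ?_ ?_ ?_
  · have : f * (s - s ^ 2) * (1 - f) = f * s * (1 - f) - f * s * (f * s * (1 - f))
        - f * s * (1 - f) * s * (1 - f) := by noncomm_ring
    rw [this, hfs]; noncomm_ring
  · have : f * (s - s ^ 2) * f = f * s * f - (f * s * f) ^ 2 + f * s * (f * f - f) * s * f
        - f * s * (1 - f) * s * f := by noncomm_ring
    rw [this, hfs, hff]
    simpa only [mul_zero, zero_mul, add_zero, sub_zero] using h₁
  · have : (1 - f) * (s - s ^ 2) * (1 - f) =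
        (1 - f) * s * (1 - f) - ((1 - f) * s * (1 - f)) ^ 2
          + (1 - f) * s * (f * f - f) * s * (1 - f) - (1 - f) * s * (f * s * (1 - f)) := by
      noncomm_ring
    rw [this, hfs, hff]
    simpa only [mul_zero, zero_mul, add_zero, sub_zero] using h₂

theorem IsIdempotentElem.isNilpotent_sub_sq_of_commute {a e : R} (he : IsIdempotentElem e)
    (hae : Commute a e) (h : IsNilpotent (a - e)) : IsNilpotent (a - a ^ 2) := by
  have hfac : a - a ^ 2 = (a - e) * (1 - e - a) := by
    have : (a - e) * (1 - e - a) = a - a ^ 2 + (e * e - e) + (e * a - a * e) := by noncomm_ring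
    rw [this, he.eq, hae.eq]; abel
  have hcomm : Commute (a - e) (1 - e - a) :=
    ((Commute.one_right _).sub_right (hae.sub_left (Commute.refl e))).sub_right
      ((Commute.refl a).sub_left hae.symm)
  rw [hfac]
  exact hcomm.isNilpotent_mul_right h

theorem IsIdempotentElem.isNilpotent_mul_sub_sq {a e : R} (he : IsIdempotentElem e)
    (hae : Commute a e) (ha : IsNilpotent (a - a ^ 2)) : IsNilpotent (a * e - (a * e) ^ 2) := by
  rw [hae.mul_pow, he.pow_succ_eq, ← sub_mul]
  exact Commute.isNilpotent_mul_right (hae.sub_left (hae.pow_left 2)) ha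

theorem isNilpotent_add_sub_sq_of_mul_eq_zero {p q : R} (hqp : q * p = 0) (hqq : q * q = 0)
    (hp : IsNilpotent (p - p ^ 2)) : IsNilpotent (p + q - (p + q) ^ 2) := by
  have hsplit : p + q - (p + q) ^ 2 = (1 - p) * q + (p - p ^ 2) - q * p - q * q := by
    noncomm_ring
  have htail : ((1 - p) * q) ^ 2 = 0 := by
    have : ((1 - p) * q) ^ 2 = (1 - p) * (q * q - q * p * q) := by noncomm_ring
    rw [this, hqq, hqp, zero_mul, sub_zero, mul_zero]
  rw [hsplit, hqp, hqq, sub_zero, sub_zero]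
  refine isNilpotent_add_of_mul_eq_zero ?_ ⟨2, htail⟩ hp
  rw [mul_assoc, mul_sub, sq, ← mul_assoc q, hqp, zero_mul, sub_self, mul_zero]

theorem Matrix.isNilpotent_fin_two_col_zero {x : R} (y : R) (hx : IsNilpotent x) :
    IsNilpotent !![x, 0; y, 0] := by
  obtain ⟨n, hn⟩ := hx
  have hpow : ∀ k : ℕ, !![x, 0; y, 0] ^ (k + 1) = !![x ^ (k + 1), 0; y * x ^ k, 0] := by
    intro k
    induction k with
    | zero => simp
    | succ k ih => simp [pow_succ _ (k + 1), ih, pow_succ, mul_assoc]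
  refine ⟨n + 1, ?_⟩
  rw [hpow, pow_succ, hn, zero_mul, mul_zero]
  ext i j; fin_cases i <;> fin_cases j <;> rfl

theorem Matrix.isNilpotent_sub_sq_fin_two_col_zero {x : R} (hx : IsNilpotent (x - x ^ 2)) :
    IsNilpotent (!![x ^ 2, 0; x, 0] - !![x ^ 2, 0; x, 0] ^ 2) := by
  have h : IsNilpotent ((x + x ^ 2) * (x - x ^ 2)) :=
    Commute.isNilpotent_mul_left (by simp only [Commute, SemiconjBy]; noncomm_ring) hx
  convert Matrix.isNilpotent_fin_two_col_zero (x - x ^ 3) h using 1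
  ext i j; fin_cases i <;> fin_cases j <;> simp [sq] <;> noncomm_ring

theorem hasHiranoInverse_anti_triangular_of_peirce {A E b c : R} (hE : IsIdempotentElem E)
    (hAE : Commute A E) (hA : IsNilpotent (A - A ^ 2)) (hEc : E * c = 0) (hcE : c * E = c)
    (hbA : b * A = 0) (hbb : b * b = 0) (hbc : b * c = 0) :
    HasHiranoInverse !![A, c + b; 1, 0] := by
  have hEA : ∀ x, E * (A * x) = A * (E * x) := fun x => by
    rw [← mul_assoc, ← hAE.eq, mul_assoc]
  have hbA' : ∀ x, b * (A * x) = 0 := fun x => by rw [← mul_assoc, hbA, zero_mul]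
  let P : Matrix (Fin 2) (Fin 2) R := !![A * A + c, A * c; A, c]
  let Q : Matrix (Fin 2) (Fin 2) R := !![b, A * b; 0, b]
  let f : Matrix (Fin 2) (Fin 2) R := !![E, 0; 0, E]
  have hM : !![A, c + b; 1, 0] ^ 2 = P + Q := by
    ext i j; fin_cases i <;> fin_cases j <;> simp [P, Q, sq, add_assoc, mul_add]
  have hQP : Q * P = 0 := by
    ext i j; fin_cases i <;> fin_cases j <;> simp [P, Q, mul_add, mul_assoc, hbA, hbA', hbc]
  have hQQ : Q * Q = 0 := by
    ext i j; fin_cases i <;> fin_cases j <;> simp [Q, mul_assoc, hbA', hbb]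
  have hf : IsIdempotentElem f := by
    simp [IsIdempotentElem, f, hE.eq]
  have h1f : 1 - f = !![1 - E, 0; 0, 1 - E] := by
    ext i j; fin_cases i <;> fin_cases j <;> simp [f]
  have hfPg : f * P * (1 - f) = 0 := by
    rw [h1f]
    ext i j; fin_cases i <;> fin_cases j <;>
      simp [f, P, mul_sub, mul_add, mul_assoc, ← hAE.eq, hEA, hE.eq, hEc]
  have hfPf : f * P * f = !![(A * E) ^ 2, 0; A * E, 0] := by
    ext i j; fin_cases i <;> fin_cases j <;>
      simp [f, P, sq, mul_add, mul_assoc, ← hAE.eq, hEA, hE.eq, hEc]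
  have hgPg : (1 - f) * P * (1 - f) = !![(A * (1 - E)) ^ 2, 0; A * (1 - E), 0] := by
    rw [h1f]
    ext i j; fin_cases i <;> fin_cases j <;>
      simp [P, sq, mul_sub, sub_mul, mul_add, add_mul, mul_assoc, ← hAE.eq, hEA, hE.eq,
        hEc, hcE]
  apply hasHiranoInverse_of_isNilpotent_sq_sub_sq_sq
  rw [hM]
  refine isNilpotent_add_sub_sq_of_mul_eq_zero hQP hQQ
    (hf.isNilpotent_sub_sq_of_mul_mul_one_sub_eq_zero hfPg ?_ ?_)
  · rw [hfPf]
    exact Matrix.isNilpotent_sub_sq_fin_two_col_zero (hE.isNilpotent_mul_sub_sq hAE hA)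
  · rw [hgPg]
    exact Matrix.isNilpotent_sub_sq_fin_two_col_zero
      (hE.one_sub.isNilpotent_mul_sub_sq ((Commute.one_right A).sub_right hAE) hA)

theorem hasHiranoInverse_anti_triangular {A B AD : R} (hcomm : A * AD = AD * A)
    (hAD : AD = AD * A * AD) (hnil : IsNilpotent (A - A * AD)) (h1 : AD * B * AD = 0)
    (h2 : B * (1 - A * AD) * B = 0) (h3 : B * A * (1 - A * AD) = 0) :
    HasHiranoInverse !![A, B; 1, 0] := by
  have hE : IsIdempotentElem (A * AD) := by
    rw [IsIdempotentElem, mul_assoc, ← mul_assoc AD, ← hAD]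
  have hAE : Commute A (A * AD) := by
    rw [Commute, SemiconjBy, mul_assoc A AD A, ← hcomm]
  have hEBE : A * AD * (B * (A * AD)) = 0 :=
    calc A * AD * (B * (A * AD)) = A * (AD * B * (A * AD)) := by noncomm_ring
      _ = A * (AD * B * AD) * A := by rw [hcomm]; noncomm_ring
      _ = 0 := by rw [h1, mul_zero, zero_mul]
  have hB : B = B * (A * AD) + B * (1 - A * AD) := by noncomm_ring
  rw [hB]
  exact hasHiranoInverse_anti_triangular_of_peirce hE hAE
    (hE.isNilpotent_sub_sq_of_commute hAE hnil) hEBE (by rw [mul_assoc, hE.eq])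
    (by rw [mul_assoc, ← ((Commute.one_right A).sub_right hAE).eq, ← mul_assoc, h3])
    (by rw [← mul_assoc, h2, zero_mul]) (by rw [← mul_assoc, h2, zero_mul])

end

theorem hirano_anti_triangular_general (A B AD : X →L[ℂ] X)
    (hAD : A * AD = AD * A ∧ AD = AD * A * AD ∧ IsNilpotent (A - A * AD))
    (h1 : AD * B * AD = 0)
    (h2 : B * (1 - A * AD) * B = 0)
    (h3 : B * A * (1 - A * AD) = 0) :
    HasHiranoInverse (!![A, B; 1, 0] : Matrix (Fin 2) (Fin 2) (X →L[ℂ] X)) :=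
  hasHiranoInverse_anti_triangular hAD.1 hAD.2.1 hAD.2.2 h1 h2 h3

theorem hirano_anti_triangular (A B AD : X →L[ℂ] X)
    (hAD : A * AD = AD * A ∧ AD = AD * A * AD ∧ IsNilpotent (A - A * AD))
    (hB : HasStronglyDrazinInverse B)
    (h1 : AD * B * AD = 0)
    (h2 : B * (1 - A * AD) * B = 0)
    (h3 : B * A * (1 - A * AD) = 0) :
    HasHiranoInverse (!![A, B; 1, 0] : Matrix (Fin 2) (Fin 2) (X →L[ℂ] X)) :=
  hirano_anti_triangular_general A B AD hAD h1 h2 h3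
end
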